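/- Generalized star inequality: for each k = 1,...,N let M^(k) be a real n_B × n_A^(k) matrix with local bound C_k = max over A ∈ {−1,1}^{n_A^(k)} of ∑_i |∑_x M^(k)_{ix} A_x|. Given correlator functions A^k_x(λ_k) ∈ [−1,1], B_i(λ⃗) ∈ [−1,1] and product probability measure, define I_i = ∫ (∏_{k=1}^N ∑_x M^(k)_{ix} A^k_x(λ_k)) B_i(λ⃗) dq. Then ∑_{i=1}^{n_B} |I_i|^{1/N} ≤ (C_1 ⋯ C_N)^{1/N}. -/

import Mathlib

/-!
Fubini on the product measure and `|B_i| ≤ 1` give `|I_i| ≤ ∏_k a_ik`, where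
`a_ik = ∫ |∑_x M^(k)_ix A^k_x| dq_k`. The map `A ↦ ∑_i |∑_x M_ix A_x|` is convex, so its maximum
over the cube `[-1,1]^n` is attained at a sign vector; hence the column sums `∑_i a_ik` are at
most `C_k`. Finally AM-GM, applied row by row to the column-normalised `a_ik`, yields
`∑_i ∏_k a_ik^(1/N) ≤ ∏_k (∑_i a_ik)^(1/N)`.
-/

open MeasureTheory Finset

theorem ConvexOn.exists_sign_ge_of_abs_le {ι : Type*} [Finite ι] {f : (ι → ℝ) → ℝ}
    (hf : ConvexOn ℝ Set.univ f) {a : ι → ℝ} (ha : ∀ x, |a x| ≤ 1) :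
    ∃ s : ι → ℝ, (∀ x, s x = 1 ∨ s x = -1) ∧ f a ≤ f s := by
  have hcube : a ∈ convexHull ℝ (Set.univ.pi fun _ ↦ ({1, -1} : Set ℝ)) := by
    refine mem_convexHull_pi fun x _ ↦ ?_
    rw [convexHull_pair, segment_eq_Icc', Set.mem_Icc]
    obtain ⟨hlo, hhi⟩ := abs_le.1 (ha x)
    constructor <;> simp [hlo, hhi]
  obtain ⟨s, hs, hle⟩ := hf.exists_ge_of_mem_convexHull (Set.subset_univ _) hcube
  exact ⟨s, fun x ↦ hs x (Set.mem_univ x), hle⟩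

theorem convexOn_sum_abs_mulVec {ι κ : Type*} [Fintype ι] [Fintype κ] (M : κ → ι → ℝ) :
    ConvexOn ℝ Set.univ fun a : ι → ℝ ↦ ∑ i, |∑ x, M i x * a x| := by
  have hterm (i : κ) : ConvexOn ℝ Set.univ fun a : ι → ℝ ↦ |∑ x, M i x * a x| :=
    convexOn_univ_norm.comp_linearMap ((LinearMap.proj i).comp (Matrix.mulVecLin (Matrix.of M)))
  simpa only [sum_fn] using
    sum_induction (s := univ) (fun i (a : ι → ℝ) ↦ |∑ x, M i x * a x|) (ConvexOn ℝ Set.univ)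
      (fun _ _ ↦ ConvexOn.add) (convexOn_const 0 convex_univ) fun i _ ↦ hterm i

theorem sum_abs_le_of_mem_upperBounds {ι κ : Type*} [Fintype ι] [Fintype κ] {M : κ → ι → ℝ}
    {C : ℝ} (hC : C ∈ upperBounds {S : ℝ | ∃ s : ι → ℝ, (∀ x, s x = 1 ∨ s x = -1) ∧
      S = ∑ i, |∑ x, M i x * s x|}) {a : ι → ℝ} (ha : ∀ x, |a x| ≤ 1) :
    ∑ i, |∑ x, M i x * a x| ≤ C := by
  obtain ⟨s, hs, hle⟩ := (convexOn_sum_abs_mulVec M).exists_sign_ge_of_abs_le ha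
  exact hle.trans (hC ⟨s, hs, rfl⟩)

theorem sum_prod_rpow_le_prod_sum_rpow {ι κ : Type*} [Fintype ι] [Fintype κ] [Nonempty κ]
    {a : ι → κ → ℝ} (ha : ∀ i k, 0 ≤ a i k) :
    ∑ i, ∏ k, a i k ^ (1 / (Fintype.card κ : ℝ)) ≤
      ∏ k, (∑ i, a i k) ^ (1 / (Fintype.card κ : ℝ)) := by
  set w : ℝ := 1 / Fintype.card κ
  set T : κ → ℝ := fun k ↦ ∑ i, a i k
  have hT (k : κ) : 0 ≤ T k := sum_nonneg fun i _ ↦ ha i k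
  have hw : ∑ _k : κ, w = 1 := by simp [w]
  have hrow (i : ι) : ∏ k, a i k ^ w = (∏ k, T k ^ w) * ∏ k, (a i k / T k) ^ w := by
    rw [← prod_mul_distrib]
    refine prod_congr rfl fun k _ ↦ ?_
    -- a column with zero sum vanishes, so the junk value `a / 0 = 0` does no harm
    have hzero : T k = 0 → a i k = 0 := fun h ↦
      (sum_eq_zero_iff_of_nonneg fun i _ ↦ ha i k).1 h i (mem_univ i)
    rw [← Real.mul_rpow (hT k) (div_nonneg (ha i k) (hT k)), mul_div_cancel_of_imp' hzero]
  have hamgm (i : ι) : ∏ k, (a i k / T k) ^ w ≤ ∑ k, w * (a i k / T k) :=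
    Real.geom_mean_le_arith_mean_weighted univ _ _ (fun _ _ ↦ by positivity) hw
      fun k _ ↦ div_nonneg (ha i k) (hT k)
  have htotal : ∑ i, ∑ k, w * (a i k / T k) ≤ 1 := by
    rw [sum_comm, ← hw]
    refine sum_le_sum fun k _ ↦ ?_
    rw [← mul_sum, ← sum_div]
    exact mul_le_of_le_one_right (by positivity) (div_self_le_one (T k))
  have hP : 0 ≤ ∏ k, T k ^ w := prod_nonneg fun k _ ↦ Real.rpow_nonneg (hT k) w
  calc ∑ i, ∏ k, a i k ^ w = (∏ k, T k ^ w) * ∑ i, ∏ k, (a i k / T k) ^ w := by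
        simp only [hrow, mul_sum]
    _ ≤ (∏ k, T k ^ w) * ∑ i, ∑ k, w * (a i k / T k) :=
        mul_le_mul_of_nonneg_left (sum_le_sum fun i _ ↦ hamgm i) hP
    _ ≤ ∏ k, T k ^ w := mul_le_of_le_one_right hP htotal

theorem abs_integral_prod_mul_le_prod_integral_abs {ι : Type*} [Fintype ι] {Λ : ι → Type*}
    [∀ k, MeasurableSpace (Λ k)] {q : ∀ k, Measure (Λ k)} [∀ k, SigmaFinite (q k)]
    {f : ∀ k, Λ k → ℝ} (hf : ∀ k, Integrable (f k) (q k)) {B : (∀ k, Λ k) → ℝ}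
    (hB : ∀ lam, |B lam| ≤ 1) :
    |∫ lam, (∏ k, f k (lam k)) * B lam ∂Measure.pi q| ≤ ∏ k, ∫ l, |f k l| ∂q k := by
  rw [← integral_fintype_prod_eq_prod (fun k l ↦ |f k l|), ← Real.norm_eq_abs]
  refine norm_integral_le_of_norm_le (Integrable.fintype_prod_dep fun k ↦ (hf k).abs)
    (ae_of_all _ fun lam ↦ ?_)
  rw [Real.norm_eq_abs, abs_mul, abs_prod]
  exact mul_le_of_le_one_right (prod_nonneg fun k _ ↦ abs_nonneg _) (hB lam)

theorem sum_integral_abs_le {ι Λ : Type*} [Fintype ι] [MeasurableSpace Λ] {q : Measure Λ}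
    [IsProbabilityMeasure q] {g : ι → Λ → ℝ} (hg : ∀ i, Integrable (g i) q) {C : ℝ}
    (hC : ∀ l, ∑ i, |g i l| ≤ C) :
    ∑ i, ∫ l, |g i l| ∂q ≤ C := by
  rw [← integral_finsetSum _ fun i _ ↦ (hg i).abs]
  simpa using integral_mono (integrable_finsetSum _ fun i _ ↦ (hg i).abs) (integrable_const C) hC

theorem stmt_4_general (N nB : ℕ) (hN : 1 ≤ N) (nA : Fin N → ℕ)
    (M : ∀ k : Fin N, Fin nB → Fin (nA k) → ℝ) (C : Fin N → ℝ)
    (hC : ∀ k, IsGreatest {S : ℝ | ∃ A : Fin (nA k) → ℝ,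
        (∀ x, A x = 1 ∨ A x = -1) ∧
        S = ∑ i : Fin nB, |∑ x : Fin (nA k), M k i x * A x|} (C k))
    (Λ : Fin N → Type) [∀ k, MeasurableSpace (Λ k)]
    (q : ∀ k, Measure (Λ k)) [∀ k, IsProbabilityMeasure (q k)]
    (A : ∀ k : Fin N, Fin (nA k) → Λ k → ℝ)
    (B : Fin nB → (∀ k, Λ k) → ℝ)
    (hAm : ∀ k x, Measurable (A k x))
    (hAb : ∀ k x lam, |A k x lam| ≤ 1)
    (hBb : ∀ i lam, |B i lam| ≤ 1)
    (I : Fin nB → ℝ)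
    (hI : ∀ i, I i = ∫ lam,
        (∏ k : Fin N, ∑ x : Fin (nA k), M k i x * A k x (lam k)) *
        B i lam ∂(Measure.pi q)) :
    ∑ i : Fin nB, |I i| ^ (1 / (N : ℝ)) ≤ (∏ k : Fin N, C k) ^ (1 / (N : ℝ)) := by
  have : Nonempty (Fin N) := ⟨⟨0, hN⟩⟩
  have hcorr (k : Fin N) (i : Fin nB) :
      Integrable (fun l ↦ ∑ x, M k i x * A k x l) (q k) :=
    integrable_finsetSum _ fun x _ ↦ ((Integrable.of_bound (hAm k x).aestronglyMeasurable 1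
      (ae_of_all _ (hAb k x))).const_mul _)
  set a : Fin nB → Fin N → ℝ := fun i k ↦ ∫ l, |∑ x, M k i x * A k x l| ∂q k
  have ha (i : Fin nB) (k : Fin N) : 0 ≤ a i k := integral_nonneg fun _ ↦ abs_nonneg _
  have hIa (i : Fin nB) : |I i| ≤ ∏ k, a i k :=
    hI i ▸ abs_integral_prod_mul_le_prod_integral_abs (fun k ↦ hcorr k i) (hBb i)
  have hcol (k : Fin N) : ∑ i, a i k ≤ C k :=
    sum_integral_abs_le (fun i ↦ hcorr k i) fun l ↦
      sum_abs_le_of_mem_upperBounds (hC k).2 fun x ↦ hAb k x l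
  have hC0 (k : Fin N) : 0 ≤ C k := by
    simpa using sum_abs_le_of_mem_upperBounds (M := M k) (hC k).2 (a := 0) (by simp)
  have hw : (0 : ℝ) ≤ 1 / N := by positivity
  calc ∑ i, |I i| ^ (1 / (N : ℝ)) ≤ ∑ i, ∏ k, a i k ^ (1 / (N : ℝ)) := by
        gcongr with i
        rw [Real.finsetProd_rpow _ _ fun k _ ↦ ha i k]
        exact Real.rpow_le_rpow (abs_nonneg _) (hIa i) hw
    _ ≤ ∏ k, (∑ i, a i k) ^ (1 / (N : ℝ)) := by
        simpa using sum_prod_rpow_le_prod_sum_rpow ha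
    _ ≤ ∏ k, C k ^ (1 / (N : ℝ)) := by
        gcongr with k
        exact hcol k
    _ = (∏ k, C k) ^ (1 / (N : ℝ)) := Real.finsetProd_rpow _ _ (fun k _ ↦ hC0 k) _

theorem stmt_4 (N nB : ℕ) (hN : 1 ≤ N) (nA : Fin N → ℕ)
    (M : ∀ k : Fin N, Fin nB → Fin (nA k) → ℝ) (C : Fin N → ℝ)
    (hC : ∀ k, IsGreatest {S : ℝ | ∃ A : Fin (nA k) → ℝ,
        (∀ x, A x = 1 ∨ A x = -1) ∧
        S = ∑ i : Fin nB, |∑ x : Fin (nA k), M k i x * A x|} (C k))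
    (Λ : Fin N → Type) [∀ k, MeasurableSpace (Λ k)]
    (q : ∀ k, Measure (Λ k)) [∀ k, IsProbabilityMeasure (q k)]
    (A : ∀ k : Fin N, Fin (nA k) → Λ k → ℝ)
    (B : Fin nB → (∀ k, Λ k) → ℝ)
    (hAm : ∀ k x, Measurable (A k x))
    (hBm : ∀ i, Measurable (B i))
    (hAb : ∀ k x lam, |A k x lam| ≤ 1)
    (hBb : ∀ i lam, |B i lam| ≤ 1)
    (I : Fin nB → ℝ)
    (hI : ∀ i, I i = ∫ lam,
        (∏ k : Fin N, ∑ x : Fin (nA k), M k i x * A k x (lam k)) *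
        B i lam ∂(Measure.pi q)) :
    ∑ i : Fin nB, |I i| ^ (1 / (N : ℝ)) ≤ (∏ k : Fin N, C k) ^ (1 / (N : ℝ)) :=
  stmt_4_general N nB hN nA M C hC Λ q A B hAm hAb hBb I hI
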